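/- arXiv:2309.06871 — 2 statements merged into one kernel-verified Lean document; each statement's English description precedes it below -/
import Mathlib

section
/- Let $h=(1,2,\dots,t,h_t,\dots,h_s)$ be an admissible Hilbert function of colength $n=\sum_i h_i$ with $n_l$ jumps of height $l$ for each $l\geq 2$. Then the dimension of the Gr\"obner cell of the lex-segment ideal $L=\operatorname{Lex}(h)$, computed as $\sum_{2\leq j+1\leq i\leq t+1}(d_j-\max(u_{i,j},0))$ where $U=(u_{i,j})$ is the degree matrix and $d_j=u_{j,j}$, equals $n-t-\sum_{l\geq 2} n_l\binom{l}{2}$. -/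
/-!
Column `x^(t-k)` of the standard monomials `x^(t-k) y^b`, `b < m k`, of the lex-segment ideal
fills the degrees `[t - k, e k)` with `e k = m k - k + t`, and `e` is nondecreasing because `m` is
strictly increasing. Hence `h i` counts the columns through degree `i`, so `n = ∑ m k`; for
`i ≥ t` the drop `h (i-1) - h i` is the number of columns ending at `i`, and for `i < t` it is
`-1`. On the other side `u (k+1) j = e j - e k + 1 ≤ 1` for `j ≤ k`, with equality iff
`e j = e k`. So the cell dimension is `∑ m k` minus the number of pairs `j ≤ k` in a common fibre
of `e`, and that number is `t + ∑ (#fibre choose 2)`.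
-/

open Finset

section Pairs

variable {α : Type*} [LinearOrder α]

theorem card_filter_le_product_self (s : Finset α) :
    #{p ∈ s ×ˢ s | p.1 ≤ p.2} = (#s).choose 2 + #s := by
  suffices #{p ∈ s ×ˢ s | p.1 ≤ p.2} = #s.sym2 by
    rw [this, card_sym2, Nat.choose_succ_succ', Nat.choose_one_right, add_comm]
  refine card_nbij (fun p => s(p.1, p.2)) ?_ ?_ ?_
  · rintro ⟨a, b⟩ hab
    simp only [coe_filter, mem_product, Set.mem_ofPred_eq] at hab
    simpa using hab.1
  · rintro ⟨a, b⟩ hab ⟨c, d⟩ hcd heq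
    simp only [coe_filter, mem_product, Set.mem_ofPred_eq] at hab hcd
    rcases Sym2.eq_iff.mp heq with ⟨rfl, rfl⟩ | ⟨rfl, rfl⟩
    · rfl
    · simp [le_antisymm hab.2 hcd.2]
  · intro z hz
    induction z using Sym2.ind with
    | h x y =>
      rw [mem_coe, mk_mem_sym2_iff] at hz
      rcases le_total x y with hxy | hyx
      · exact ⟨(x, y), by simp [hz, hxy], rfl⟩
      · exact ⟨(y, x), by simp [hz, hyx], Sym2.eq_swap⟩

theorem card_filter_le_and_eq_product_self_of_mapsTo {β : Type*} [DecidableEq β] {s : Finset α}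
    {T : Finset β} {f : α → β} (hf : ∀ a ∈ s, f a ∈ T) :
    #{p ∈ s ×ˢ s | p.1 ≤ p.2 ∧ f p.1 = f p.2}
      = ∑ v ∈ T, (#{a ∈ s | f a = v}).choose 2 + #s := by
  have hfib : ∀ v ∈ T, {p ∈ {p ∈ s ×ˢ s | p.1 ≤ p.2 ∧ f p.1 = f p.2} | f p.1 = v}
      = {p ∈ {a ∈ s | f a = v} ×ˢ {a ∈ s | f a = v} | p.1 ≤ p.2} := by
    intro v _
    ext ⟨a, b⟩
    simp only [mem_filter, mem_product]
    constructor
    · rintro ⟨⟨⟨ha, hb⟩, hab, hfab⟩, rfl⟩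
      exact ⟨⟨⟨ha, rfl⟩, hb, hfab.symm⟩, hab⟩
    · rintro ⟨⟨⟨ha, rfl⟩, hb, hfb⟩, hab⟩
      exact ⟨⟨⟨ha, hb⟩, hab, hfb.symm⟩, rfl⟩
  rw [card_eq_sum_card_fiberwise (f := fun p => f p.1) (t := T)
      (fun p hp => hf _ (mem_product.mp (mem_filter.mp hp).1).1),
    sum_congr rfl fun v hv => by rw [hfib v hv, card_filter_le_product_self],
    sum_add_distrib, ← card_eq_sum_card_fiberwise hf]

end Pairs

theorem sum_card_filter_nsmul_eq_sum_comp {ι β M : Type*} [AddCommMonoid M] [DecidableEq β]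
    (s : Finset ι) (T : Finset β) (f : ι → β) (g : β → M)
    (hg : ∀ i ∈ s, f i ∉ T → g (f i) = 0) :
    ∑ l ∈ T, #{i ∈ s | f i = l} • g l = ∑ i ∈ s, g (f i) := by
  simp_rw [← sum_const]
  rw [sum_fiberwise_eq_sum_filter']
  exact sum_filter_of_ne fun i hi hne => by_contra fun hT => hne (hg i hi hT)

section Cover

variable {ι : Type*} (s : Finset ι) (lo hi : ι → ℕ)

def coverCount (i : ℕ) : ℕ := #{k ∈ s | lo k ≤ i ∧ i < hi k}

theorem coverCount_sub_coverCount_succ (hlohi : ∀ k ∈ s, lo k ≤ hi k) (i : ℕ) :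
    (coverCount s lo hi i : ℤ) - coverCount s lo hi (i + 1)
      = #{k ∈ s | hi k = i + 1} - #{k ∈ s | lo k = i + 1} := by
  simp only [coverCount, card_filter]
  push_cast
  rw [← sum_sub_distrib, ← sum_sub_distrib]
  refine sum_congr rfl fun k hk => ?_
  have := hlohi k hk
  split_ifs <;> omega

theorem sum_range_coverCount {N : ℕ} (hN : ∀ k ∈ s, hi k ≤ N) :
    ∑ i ∈ range N, coverCount s lo hi i = ∑ k ∈ s, (hi k - lo k) := by
  simp only [coverCount, card_filter]
  rw [sum_comm]
  refine sum_congr rfl fun k hk => ?_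
  rw [← card_filter, ← Nat.card_Ico]
  congr 1
  ext i
  simp only [mem_filter, mem_range, mem_Ico]
  have := hN k hk
  omega

end Cover

theorem monotoneOn_sub_of_lt_succ {m : ℕ → ℤ} {t : ℕ} (hm : ∀ i, i < t → m i < m (i + 1)) :
    MonotoneOn (fun k => m k - k) (Set.Iic t) := by
  refine monotoneOn_of_le_succ Set.ordConnected_Iic fun a _ _ ha => ?_
  rw [Order.succ_eq_add_one, Set.mem_Iic] at *
  have := hm a (by omega)
  push_cast
  omega

theorem sum_lowerTriangle_reindex {M : Type*} [AddCommMonoid M] (t : ℕ) (f : ℕ → ℕ → M) :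
    ∑ p ∈ {p ∈ Icc 1 (t + 1) ×ˢ Icc 1 t | p.2 + 1 ≤ p.1}, f p.1 p.2
      = ∑ p ∈ {p ∈ Icc 1 t ×ˢ Icc 1 t | p.1 ≤ p.2}, f (p.2 + 1) p.1 := by
  refine sum_nbij' (fun p => (p.2, p.1 - 1)) (fun p => (p.2 + 1, p.1)) ?_ ?_ ?_ ?_ ?_
  all_goals rintro ⟨i, j⟩ hij
  all_goals simp only [mem_filter, mem_product, mem_Icc, Prod.mk.injEq] at hij ⊢
  · omega
  · omega
  · simp only [and_true]; omega
  · simp only [true_and]; omega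
  · rw [Nat.sub_add_cancel (by omega)]

theorem sum_filter_le_product_Icc_fst {M : Type*} [AddCommMonoid M] (t : ℕ) (f : ℕ → M) :
    ∑ p ∈ {p ∈ Icc 1 t ×ˢ Icc 1 t | p.1 ≤ p.2}, f p.1 = ∑ k ∈ Icc 1 t, ∑ j ∈ Icc 1 k, f j := by
  rw [sum_filter, sum_product_right]
  refine sum_congr rfl fun k hk => ?_
  rw [← sum_filter]
  congr 1
  ext j
  simp only [mem_filter, mem_Icc] at hk ⊢
  omega

theorem sum_Icc_sub_pred {G : Type*} [AddCommGroup G] (f : ℕ → G) (k : ℕ) :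
    ∑ j ∈ Icc 1 k, (f j - f (j - 1)) = f k - f 0 := by
  induction k with
  | zero => simp
  | succ k ih => rw [sum_Icc_succ_top (by omega), ih, Nat.add_sub_cancel]; abel

/-- `columnEnd t m k` is one more than the top degree of the column `x^(t-k) y^b`, `b < m k`,
of standard monomials of the lex-segment ideal. -/
def columnEnd (t : ℕ) (m : ℕ → ℤ) (k : ℕ) : ℕ := (m k - k).toNat + t

section Staircase

variable {t : ℕ} {m : ℕ → ℤ}

theorem le_columnEnd (k : ℕ) : t ≤ columnEnd t m k := Nat.le_add_left t _

theorem columnEnd_cast (hm0 : m 0 = 0) (hmono : ∀ i, i < t → m i < m (i + 1)) {k : ℕ}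
    (hk : k ≤ t) : (columnEnd t m k : ℤ) = m k - k + t := by
  have := monotoneOn_sub_of_lt_succ hmono (Set.mem_Iic.2 (Nat.zero_le t)) (Set.mem_Iic.2 hk)
    (Nat.zero_le k)
  simp only [hm0, Nat.cast_zero, sub_zero] at this
  simp only [columnEnd]
  omega

theorem columnEnd_le (hm0 : m 0 = 0) (hmono : ∀ i, i < t → m i < m (i + 1)) {k : ℕ}
    (hk : k ≤ t) : columnEnd t m k ≤ (m t).toNat := by
  have := monotoneOn_sub_of_lt_succ hmono (Set.mem_Iic.2 hk) (Set.mem_Iic.2 le_rfl) hk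
  have := columnEnd_cast hm0 hmono hk
  simp only at *
  omega

theorem card_filter_range_eq_coverCount (hm0 : m 0 = 0)
    (hmono : ∀ i, i < t → m i < m (i + 1)) (i : ℕ) :
    #{a ∈ range t | a ≤ i ∧ ((i - a : ℕ) : ℤ) < m (t - a)}
      = coverCount (Icc 1 t) (t - ·) (columnEnd t m) i := by
  refine card_nbij' (t - ·) (t - ·) ?_ ?_ ?_ ?_
  · intro a ha
    simp only [coe_filter, mem_range, Set.mem_ofPred_eq, mem_Icc] at ha ⊢
    have := columnEnd_cast hm0 hmono (k := t - a) (by omega)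
    omega
  · intro k hk
    simp only [coe_filter, mem_range, Set.mem_ofPred_eq, mem_Icc] at hk ⊢
    have := columnEnd_cast hm0 hmono hk.1.2
    rw [Nat.sub_sub_self hk.1.2]
    omega
  · intro a ha
    simp only [coe_filter, mem_range, Set.mem_ofPred_eq] at ha
    dsimp only
    omega
  · intro k hk
    simp only [coe_filter, mem_Icc, Set.mem_ofPred_eq] at hk
    dsimp only
    omega

theorem sum_range_coverCount_columnEnd (hm0 : m 0 = 0)
    (hmono : ∀ i, i < t → m i < m (i + 1)) {N : ℕ} (hN : (m t).toNat < N) :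
    ((∑ i ∈ range N, coverCount (Icc 1 t) (t - ·) (columnEnd t m) i : ℕ) : ℤ)
      = ∑ k ∈ Icc 1 t, m k := by
  rw [sum_range_coverCount _ _ _ fun k hk =>
    (columnEnd_le hm0 hmono (mem_Icc.1 hk).2).trans hN.le, Nat.cast_sum]
  refine sum_congr rfl fun k hk => ?_
  have := columnEnd_cast hm0 hmono (mem_Icc.1 hk).2
  rw [Nat.cast_sub ((Nat.sub_le t k).trans (le_columnEnd k)), Nat.cast_sub (mem_Icc.1 hk).2]
  omega

theorem coverCount_pred_sub_coverCount_eq_iff {i l : ℕ} (hi : 1 ≤ i) (hl : 2 ≤ l) :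
    (coverCount (Icc 1 t) (t - ·) (columnEnd t m) (i - 1) : ℤ)
        - coverCount (Icc 1 t) (t - ·) (columnEnd t m) i = l
      ↔ #{k ∈ Icc 1 t | columnEnd t m k = i} = l := by
  obtain ⟨i, rfl⟩ : ∃ j, i = j + 1 := ⟨i - 1, by omega⟩
  rw [Nat.add_sub_cancel, coverCount_sub_coverCount_succ (Icc 1 t) (t - ·) (columnEnd t m)
    fun k _ => (Nat.sub_le t k).trans (le_columnEnd k)]
  by_cases hti : t ≤ i + 1
  · have hlo : {k ∈ Icc 1 t | t - k = i + 1} = ∅ :=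
      filter_false_of_mem fun k hk => by rw [mem_Icc] at hk; omega
    rw [hlo, card_empty, Nat.cast_zero, sub_zero, Nat.cast_inj]
  · have hhi : {k ∈ Icc 1 t | columnEnd t m k = i + 1} = ∅ :=
      filter_false_of_mem fun k _ => by have := le_columnEnd (t := t) (m := m) k; omega
    rw [hhi, card_empty, Nat.cast_zero, zero_sub]
    omega

theorem sum_lowerTriangle_degreeMatrix (hm0 : m 0 = 0) (hmono : ∀ i, i < t → m i < m (i + 1))
    (u : ℕ → ℕ → ℤ) (hu : ∀ i j, u i j = m j - m (i - 1) + (i : ℤ) - (j : ℤ))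
    (d : ℕ → ℤ) (hd : ∀ j, d j = m j - m (j - 1)) :
    ∑ p ∈ {p ∈ Icc 1 (t + 1) ×ˢ Icc 1 t | p.2 + 1 ≤ p.1}, (d p.2 - max (u p.1 p.2) 0)
      = ∑ k ∈ Icc 1 t, m k
        - #{p ∈ Icc 1 t ×ˢ Icc 1 t | p.1 ≤ p.2 ∧ columnEnd t m p.1 = columnEnd t m p.2} := by
  have hterm : ∀ p ∈ {p ∈ Icc 1 t ×ˢ Icc 1 t | p.1 ≤ p.2},
      d p.1 - max (u (p.2 + 1) p.1) 0
        = (m p.1 - m (p.1 - 1)) - if columnEnd t m p.1 = columnEnd t m p.2 then 1 else 0 := by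
    rintro ⟨j, k⟩ hjk
    simp only [mem_filter, mem_product, mem_Icc] at hjk
    have hj := columnEnd_cast hm0 hmono (k := j) (by omega)
    have hk := columnEnd_cast hm0 hmono (k := k) (by omega)
    have hmon := monotoneOn_sub_of_lt_succ hmono (Set.mem_Iic.2 (by omega : j ≤ t))
      (Set.mem_Iic.2 hjk.1.2.2) hjk.2
    simp only [hd, hu, Nat.add_sub_cancel] at hmon ⊢
    split_ifs <;> omega
  rw [sum_lowerTriangle_reindex t fun i j => d j - max (u i j) 0, sum_congr rfl hterm,
    sum_sub_distrib, sum_filter_le_product_Icc_fst t fun j => m j - m (j - 1), sum_boole,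
    filter_filter]
  simp only [sum_Icc_sub_pred, hm0, sub_zero]

end Staircase

theorem stmt_6_general (t : ℕ) (m : ℕ → ℤ) (hm0 : m 0 = 0)
    (hmono : ∀ i, i < t → m i < m (i + 1))
    (u : ℕ → ℕ → ℤ) (hu : ∀ i j, u i j = m j - m (i - 1) + (i : ℤ) - (j : ℤ))
    (d : ℕ → ℤ) (hd : ∀ j, d j = m j - m (j - 1))
    (h : ℕ → ℕ)
    (hh : ∀ i, h i = ((Finset.range t).filter
      (fun a => a ≤ i ∧ ((i - a : ℕ) : ℤ) < m (t - a))).card)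
    (S : ℕ) (hS : S = t + (m t).toNat + 2)
    (n : ℕ) (hn : n = ∑ i ∈ Finset.range (S + 1), h i)
    (nl : ℕ → ℕ)
    (hnl : ∀ l, nl l = ((Finset.Icc 1 S).filter
      (fun i => (h (i - 1) : ℤ) - (h i : ℤ) = (l : ℤ))).card) :
    ∑ p ∈ (Finset.Icc 1 (t + 1) ×ˢ Finset.Icc 1 t).filter (fun p => p.2 + 1 ≤ p.1),
        (d p.2 - max (u p.1 p.2) 0)
      = (n : ℤ) - (t : ℤ) - ∑ l ∈ Finset.Icc 2 S, (nl l : ℤ) * (Nat.choose l 2 : ℤ) := by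
  set F : ℕ → ℕ := fun i => #{k ∈ Icc 1 t | columnEnd t m k = i}
  obtain rfl : h = coverCount (Icc 1 t) (t - ·) (columnEnd t m) :=
    funext fun i => (hh i).trans (card_filter_range_eq_coverCount hm0 hmono i)
  have hcol : (n : ℤ) = ∑ k ∈ Icc 1 t, m k := by
    rw [hn, sum_range_coverCount_columnEnd hm0 hmono (by omega)]
  have hjumps : ∑ l ∈ Icc 2 S, (nl l : ℤ) * (l.choose 2 : ℤ)
      = ∑ i ∈ Icc 1 S, ((F i).choose 2 : ℤ) := by
    rw [← sum_card_filter_nsmul_eq_sum_comp (Icc 1 S) (Icc 2 S) F fun l => (l.choose 2 : ℤ)]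
    · refine sum_congr rfl fun l hl => ?_
      rw [hnl, nsmul_eq_mul, filter_congr fun i hi =>
        coverCount_pred_sub_coverCount_eq_iff (mem_Icc.1 hi).1 (mem_Icc.1 hl).1]
    · intro i _ hFi
      have : F i ≤ t := (card_filter_le _ _).trans_eq (Nat.card_Icc 1 t)
      rw [Nat.choose_eq_zero_of_lt (by simp only [mem_Icc] at hFi; omega), Nat.cast_zero]
  have hmaps : ∀ k ∈ Icc 1 t, columnEnd t m k ∈ Icc 1 S := fun k hk => by
    have := columnEnd_le hm0 hmono (mem_Icc.1 hk).2
    have := le_columnEnd (t := t) (m := m) k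
    simp only [mem_Icc] at hk ⊢
    omega
  rw [sum_lowerTriangle_degreeMatrix hm0 hmono u hu d hd,
    card_filter_le_and_eq_product_self_of_mapsTo hmaps, hcol, hjumps, Nat.card_Icc]
  push_cast
  ring

/-- For an admissible Hilbert function `h` of colength `n` with `nl l` jumps of
height `l ≥ 2`, the dimension of the Gröbner cell of the lex-segment ideal `Lex h`, computed
as `∑ (d j - max (u i j) 0)` over entries strictly below the diagonal of the degree matrix,
equals `n - t - ∑_{l ≥ 2} nl l * choose l 2`.  Here `h` is expressed via the staircase of the
lex-segment ideal `(x^t, x^{t-1}y^{m 1}, …, y^{m t})` given by `0 = m 0 < m 1 < ⋯ < m t`. -/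
theorem stmt_6 (t : ℕ) (ht : 1 ≤ t) (m : ℕ → ℤ) (hm0 : m 0 = 0)
    (hmono : ∀ i, i < t → m i < m (i + 1))
    (u : ℕ → ℕ → ℤ) (hu : ∀ i j, u i j = m j - m (i - 1) + (i : ℤ) - (j : ℤ))
    (d : ℕ → ℤ) (hd : ∀ j, d j = m j - m (j - 1))
    (h : ℕ → ℕ)
    (hh : ∀ i, h i = ((Finset.range t).filter
      (fun a => a ≤ i ∧ ((i - a : ℕ) : ℤ) < m (t - a))).card)
    (S : ℕ) (hS : S = t + (m t).toNat + 2)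
    (n : ℕ) (hn : n = ∑ i ∈ Finset.range (S + 1), h i)
    (nl : ℕ → ℕ)
    (hnl : ∀ l, nl l = ((Finset.Icc 1 S).filter
      (fun i => (h (i - 1) : ℤ) - (h i : ℤ) = (l : ℤ))).card) :
    ∑ p ∈ (Finset.Icc 1 (t + 1) ×ˢ Finset.Icc 1 t).filter (fun p => p.2 + 1 ≤ p.1),
        (d p.2 - max (u p.1 p.2) 0)
      = (n : ℤ) - (t : ℤ) - ∑ l ∈ Finset.Icc 2 S, (nl l : ℤ) * (Nat.choose l 2 : ℤ) :=
  stmt_6_general t m hm0 hmono u hu d hd h hh S hS n hn nl hnl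
end

section
/- Let $h=(1,2,\dots,t,h_t,\dots,h_s)$ be an admissible Hilbert function. The dimension of the homogeneous sub-cell of the lex-segment Gr\"obner cell, given by $\#\{(i,j): u_{i,j}=0,\ j\leq i-2\}+\#\{(i,j): u_{i,j}=1,\ j\leq i-1,\ d_j\neq 1\}$, equals $t+\sum_{i=t-1}^{s}(h_{i-1}-h_i)(h_i-h_{i+1})$. -/
/-!
Put `G k = m k - k` (`lexExcess m`); it is nondecreasing on `[0, t]` with `G 0 = 0`, and
`u i j = G j - G (i - 1) + 1`, `d j = G j - G (j - 1) + 1`. Let `c e` be the number of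
`k ∈ [1, t]` with `G k = e`. The entries `u i j = 0` are the pairs with `G (i - 1) = G j + 1`,
so there are `∑ₑ c e * c (e + 1)` of them. The entries `u i j = 1` with `d j ≠ 1` are, in each
row `i`, the first index `j` at which `G` reaches `G (i - 1)`; such a `j ≥ 1` exists exactly when
`G (i - 1) ≥ 1`, giving `t - c 0` entries. On the other side, for `n ≥ t - 1` the value `h n` counts
the `k ∈ [1, t]` with `G k ≥ n + 1 - t`, so the differences `h (i - 1) - h i` for `i ≥ t` are
`c 0, c 1, …`, while `h (t - 2) - h (t - 1) = -1`. Both sides are thus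
`t - c 0 + ∑ₑ c e * c (e + 1)`.
-/

open Finset

lemma Finset.card_filter_product_eq_sum_left {α β : Type*} (s : Finset α) (s' : Finset β)
    (P : α × β → Prop) [DecidablePred P] :
    #{p ∈ s ×ˢ s' | P p} = ∑ a ∈ s, #{b ∈ s' | P (a, b)} := by
  simp only [card_filter, sum_product]

lemma Finset.card_filter_product_eq_sum_right {α β : Type*} (s : Finset α) (s' : Finset β)
    (P : α × β → Prop) [DecidablePred P] :
    #{p ∈ s ×ˢ s' | P p} = ∑ b ∈ s', #{a ∈ s | P (a, b)} := by
  simp only [card_filter, sum_product_right]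

lemma Finset.card_filter_le_eq_card_filter_eq_add {ι : Type*} (s : Finset ι) (G : ι → ℤ)
    (e : ℤ) : #{k ∈ s | e ≤ G k} = #{k ∈ s | G k = e} + #{k ∈ s | e + 1 ≤ G k} := by
  classical
  rw [← card_union_of_disjoint (disjoint_filter.2 fun k _ h => by omega), ← filter_or]
  exact congrArg card (filter_congr fun k _ => by omega)

lemma Nat.card_filter_Icc_succ_sub_one {P : ℕ → Prop} [DecidablePred P] (h0 : ¬ P 0) (t : ℕ) :
    #{i ∈ Icc 1 (t + 1) | P (i - 1)} = #{k ∈ Icc 1 t | P k} := by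
  refine card_nbij' (· - 1) (· + 1) (fun i hi => ?_) (fun k hk => ?_) (fun i hi => ?_)
    (fun k _ => by simp)
  all_goals simp only [coe_filter, mem_Icc, Set.mem_ofPred_eq] at *
  · refine ⟨⟨?_, by omega⟩, hi.2⟩
    by_contra! h
    exact h0 (by simpa [show i - 1 = 0 by omega] using hi.2)
  · exact ⟨by omega, by simpa using hk.2⟩
  · omega

lemma Int.sum_Icc_sub_mul_sub {H c : ℤ → ℤ} {T S : ℤ} (hTS : T ≤ S)
    (hstart : H (T - 2) = H (T - 1) - 1)
    (hdiff : ∀ e, 0 ≤ e → H (T - 1 + e) = c e + H (T + e)) :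
    ∑ i ∈ Icc (T - 1) S, (H (i - 1) - H i) * (H i - H (i + 1))
      = -c 0 + ∑ e ∈ Icc 0 (S - T), c e * c (e + 1) := by
  rw [← insert_Icc_left_eq_Icc_sub_one (by omega), sum_insert (by simp)]
  congr 1
  · have h0 := hdiff 0 le_rfl
    rw [add_zero, add_zero] at h0
    rw [show T - 1 - 1 = T - 2 by ring, sub_add_cancel, hstart, h0]
    ring
  · have hIcc : Icc T S = (Icc 0 (S - T)).map (addLeftEmbedding T) := by simp
    rw [hIcc, sum_map]
    refine sum_congr rfl fun e he => ?_
    have h1 := hdiff e (mem_Icc.1 he).1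
    have h2 := hdiff (e + 1) (by linarith [(mem_Icc.1 he).1])
    rw [show T - 1 + (e + 1) = T + e by ring, show T + (e + 1) = T + e + 1 by ring] at h2
    rw [addLeftEmbedding_apply, show T + e - 1 = T - 1 + e by ring, h1, h2]
    ring

def fiberCard (G : ℕ → ℤ) (t : ℕ) (e : ℤ) : ℕ := #{k ∈ Icc 1 t | G k = e}

section MonotoneOn

variable {G : ℕ → ℤ} {t : ℕ} (hG : MonotoneOn G (Set.Iic t)) (hG0 : G 0 = 0)
include hG hG0

lemma nonneg_of_monotoneOn_Iic {k : ℕ} (hk : k ≤ t) : 0 ≤ G k :=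
  hG0 ▸ hG (Nat.zero_le t) hk (Nat.zero_le k)

lemma card_filter_eq_add_one_eq_sum_fiberCard_mul {N : ℤ} (hN : G t ≤ N) :
    #{p ∈ Icc 1 (t + 1) ×ˢ Icc 1 t | p.2 + 2 ≤ p.1 ∧ G (p.1 - 1) = G p.2 + 1}
      = ∑ e ∈ Icc 0 N, fiberCard G t e * fiberCard G t (e + 1) := by
  have hfiber : ∀ j ∈ Icc 1 t,
      #{i ∈ Icc 1 (t + 1) | j + 2 ≤ i ∧ G (i - 1) = G j + 1} = fiberCard G t (G j + 1) := by
    intro j hj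
    rw [mem_Icc] at hj
    have hG0j : G 0 ≠ G j + 1 := by linarith [nonneg_of_monotoneOn_Iic hG hG0 hj.2]
    rw [fiberCard, ← Nat.card_filter_Icc_succ_sub_one (P := (G · = G j + 1)) hG0j]
    refine congrArg card (filter_congr fun i hi => and_iff_right_of_imp fun hi' => ?_)
    rw [mem_Icc] at hi
    by_contra! hij
    have := hG (show i - 1 ≤ t by omega) hj.2 (show i - 1 ≤ j by omega)
    omega
  have hmaps : ∀ j ∈ Icc 1 t, G j ∈ Icc 0 N := fun j hj => by
    rw [mem_Icc] at hj ⊢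
    exact ⟨nonneg_of_monotoneOn_Iic hG hG0 hj.2, (hG hj.2 Set.self_mem_Iic hj.2).trans hN⟩
  rw [card_filter_product_eq_sum_right, sum_congr rfl hfiber, ← sum_fiberwise_of_maps_to hmaps]
  refine sum_congr rfl fun e _ => ?_
  rw [sum_congr rfl fun j hj => by rw [(mem_filter.1 hj).2], sum_const, smul_eq_mul]
  rfl

lemma card_filter_first_hit {k : ℕ} (hk : k ≤ t) :
    #{j ∈ Icc 1 t | j ≤ k ∧ G k = G j ∧ G j ≠ G (j - 1)} = if 1 ≤ G k then 1 else 0 := by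
  have hle : ∀ a b, a ≤ b → b ≤ t → G a ≤ G b := fun a b hab hb => hG (hab.trans hb) hb hab
  split_ifs with hGk
  · refine le_antisymm (card_le_one.2 fun a ha b hb => ?_) (card_pos.2 ?_)
    · simp only [mem_filter, mem_Icc] at ha hb
      by_contra! hab
      wlog hlt : a < b generalizing a b
      · exact this b a hb ha hab.symm (by omega)
      have := hle a (b - 1) (by omega) (by omega)
      have := hle (b - 1) b (by omega) hb.1.2
      exact hb.2.2.2 (by omega)
    · classical
      have hex : ∃ j, G j = G k := ⟨k, rfl⟩
      have hj := Nat.find_spec hex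
      have hjk := Nat.find_min' hex rfl
      have hj0 : Nat.find hex ≠ 0 := fun h => by rw [h, hG0] at hj; omega
      refine ⟨Nat.find hex, mem_filter.2 ⟨mem_Icc.2 ⟨by omega, by omega⟩, hjk, hj.symm, ?_⟩⟩
      exact fun h => Nat.find_min hex (Nat.sub_one_lt hj0) (h ▸ hj)
  · refine card_eq_zero.2 (filter_eq_empty_iff.2 fun j hj ⟨hjk, hGj, hne⟩ => hne ?_)
    rw [mem_Icc] at hj
    have := hle 0 (j - 1) (Nat.zero_le _) (by omega)
    have := hle (j - 1) j (by omega) hj.2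
    omega

lemma card_filter_eq_add_fiberCard_zero :
    #{p ∈ Icc 1 (t + 1) ×ˢ Icc 1 t | p.2 + 1 ≤ p.1 ∧ G (p.1 - 1) = G p.2 ∧ G p.2 ≠ G (p.2 - 1)}
      + fiberCard G t 0 = t := by
  have hrow : ∀ i ∈ Icc 1 (t + 1),
      #{j ∈ Icc 1 t | j + 1 ≤ i ∧ G (i - 1) = G j ∧ G j ≠ G (j - 1)}
        = if 1 ≤ G (i - 1) then 1 else 0 := by
    intro i hi
    rw [mem_Icc] at hi
    rw [← card_filter_first_hit hG hG0 (k := i - 1) (by omega)]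
    exact congrArg card (filter_congr fun j _ => by rw [Nat.le_sub_iff_add_le hi.1])
  rw [card_filter_product_eq_sum_left, sum_congr rfl hrow, ← card_filter,
    Nat.card_filter_Icc_succ_sub_one (P := (1 ≤ G ·)) (by simp [hG0])]
  have hsplit := card_filter_add_card_filter_not (s := Icc 1 t) (fun k => 1 ≤ G k)
  rw [Nat.card_Icc, add_tsub_cancel_right] at hsplit
  convert hsplit using 2
  refine congrArg card (filter_congr fun k hk => ?_)
  have := nonneg_of_monotoneOn_Iic hG hG0 (mem_Icc.1 hk).2
  omega

end MonotoneOn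

def lexExcess (m : ℕ → ℤ) (k : ℕ) : ℤ := m k - k

lemma monotoneOn_lexExcess {m : ℕ → ℤ} {t : ℕ} (hm : ∀ i, i < t → m i < m (i + 1)) :
    MonotoneOn (lexExcess m) (Set.Iic t) :=
  monotoneOn_of_le_add_one Set.ordConnected_Iic fun k _ _ hk => by
    have := hm k hk
    simp only [lexExcess]
    push_cast
    omega

def lexHilbert (t : ℕ) (m : ℕ → ℤ) (n : ℕ) : ℕ :=
  #{a ∈ range t | a ≤ n ∧ ((n - a : ℕ) : ℤ) < m (t - a)}

section LexHilbert

variable {t : ℕ} {m : ℕ → ℤ}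

lemma lexHilbert_eq_card (n : ℕ) :
    lexHilbert t m n = #{k ∈ Icc 1 t | t ≤ n + k ∧ (n : ℤ) + 1 - t ≤ lexExcess m k} := by
  unfold lexExcess
  refine card_nbij' (t - ·) (t - ·) (fun a ha => ?_) (fun k hk => ?_) (fun a ha => ?_)
    (fun k hk => ?_)
  all_goals simp only [coe_filter, mem_range, mem_Icc, Set.mem_ofPred_eq] at *
  · exact ⟨⟨by omega, by omega⟩, by omega, by omega⟩
  · refine ⟨by omega, by omega, ?_⟩
    rw [Nat.sub_sub_self (by omega)]
    omega
  all_goals omega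

lemma lexHilbert_of_le {n : ℕ} (hn : t ≤ n + 1) :
    lexHilbert t m n = #{k ∈ Icc 1 t | (n : ℤ) + 1 - t ≤ lexExcess m k} :=
  (lexHilbert_eq_card n).trans (congrArg card (filter_congr fun k hk => by
    rw [mem_Icc] at hk; omega))

lemma lexHilbert_sub_two (ht : 2 ≤ t) (hm : ∀ k ≤ t, 0 ≤ lexExcess m k) :
    lexHilbert t m (t - 2) = t - 1 := by
  rw [lexHilbert_eq_card, show t - 1 = t + 1 - 2 by omega, ← Nat.card_Icc 2 t]
  refine congrArg card (ext fun k => ?_)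
  unfold lexExcess at hm ⊢
  simp only [mem_filter, mem_Icc]
  constructor
  · omega
  · intro hk
    have := hm k hk.2
    omega

lemma sum_Icc_lexHilbert_sub_mul_sub (ht : 1 ≤ t) (hm : ∀ k ≤ t, 0 ≤ lexExcess m k) {H : ℤ → ℤ}
    (hH : ∀ i, H i = if i < 0 then 0 else (lexHilbert t m i.toNat : ℤ)) {S : ℤ} (hS : t ≤ S) :
    ∑ i ∈ Icc ((t : ℤ) - 1) S, (H (i - 1) - H i) * (H i - H (i + 1))
      = -(fiberCard (lexExcess m) t 0 : ℤ) + ∑ e ∈ Icc 0 (S - t),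
          (fiberCard (lexExcess m) t e : ℤ) * fiberCard (lexExcess m) t (e + 1) := by
  have htail : ∀ e : ℤ, 0 ≤ e → H (t - 1 + e) = #{k ∈ Icc 1 t | e ≤ lexExcess m k} := by
    intro e he
    rw [hH, if_neg (by omega), lexHilbert_of_le (by omega)]
    exact congrArg _ (congrArg card (filter_congr fun k _ => by omega))
  have hstart : H (t - 2) = H (t - 1) - 1 := by
    rw [← add_zero ((t : ℤ) - 1), htail 0 le_rfl,
      filter_true_of_mem fun k hk => hm k (mem_Icc.1 hk).2, Nat.card_Icc, hH]
    split_ifs with hneg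
    · omega
    · rw [show ((t : ℤ) - 2).toNat = t - 2 by omega, lexHilbert_sub_two (by omega) hm]
      omega
  refine Int.sum_Icc_sub_mul_sub (c := fun e => (fiberCard (lexExcess m) t e : ℤ)) hS hstart
    fun e he => ?_
  rw [show (t : ℤ) + e = t - 1 + (e + 1) by ring, htail e he, htail (e + 1) (by omega),
    card_filter_le_eq_card_filter_eq_add]
  push_cast
  rfl

end LexHilbert

/-- For an admissible Hilbert function `h` (realized as the staircase of the
lex-segment ideal given by `0 = m 0 < ⋯ < m t`), the dimension of the homogeneous sub-cell,
computed as `#{(i,j) : u i j = 0, j ≤ i-2} + #{(i,j) : u i j = 1, j ≤ i-1, d j ≠ 1}`,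
equals `t + ∑_{i = t-1}^{s} (h (i-1) - h i) * (h i - h (i+1))` (with `h` extended by `0`
at negative indices). -/
theorem stmt_7 (t : ℕ) (ht : 1 ≤ t) (m : ℕ → ℤ) (hm0 : m 0 = 0)
    (hmono : ∀ i, i < t → m i < m (i + 1))
    (u : ℕ → ℕ → ℤ) (hu : ∀ i j, u i j = m j - m (i - 1) + (i : ℤ) - (j : ℤ))
    (d : ℕ → ℤ) (hd : ∀ j, d j = m j - m (j - 1))
    (h : ℕ → ℕ)
    (hh : ∀ i, h i = ((Finset.range t).filter
      (fun a => a ≤ i ∧ ((i - a : ℕ) : ℤ) < m (t - a))).card)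
    (hz : ℤ → ℤ) (hhz : ∀ i : ℤ, hz i = if i < 0 then 0 else (h i.toNat : ℤ))
    (S : ℕ) (hS : S = t + (m t).toNat + 2) :
    ((((Finset.Icc 1 (t + 1) ×ˢ Finset.Icc 1 t).filter
        (fun p => p.2 + 2 ≤ p.1 ∧ u p.1 p.2 = 0)).card : ℤ)
      + (((Finset.Icc 1 (t + 1) ×ˢ Finset.Icc 1 t).filter
        (fun p => p.2 + 1 ≤ p.1 ∧ u p.1 p.2 = 1 ∧ d p.2 ≠ 1)).card : ℤ))
      = (t : ℤ) + ∑ i ∈ Finset.Icc ((t : ℤ) - 1) (S : ℤ),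
          (hz (i - 1) - hz i) * (hz i - hz (i + 1)) := by
  have hG := monotoneOn_lexExcess hmono
  have hG0 : lexExcess m 0 = 0 := by simp [lexExcess, hm0]
  have hA : ((Icc 1 (t + 1) ×ˢ Icc 1 t).filter fun p => p.2 + 2 ≤ p.1 ∧ u p.1 p.2 = 0)
      = {p ∈ Icc 1 (t + 1) ×ˢ Icc 1 t |
          p.2 + 2 ≤ p.1 ∧ lexExcess m (p.1 - 1) = lexExcess m p.2 + 1} :=
    filter_congr fun p _ => by rw [hu, lexExcess, lexExcess]; omega
  have hB : ((Icc 1 (t + 1) ×ˢ Icc 1 t).filter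
        fun p => p.2 + 1 ≤ p.1 ∧ u p.1 p.2 = 1 ∧ d p.2 ≠ 1)
      = {p ∈ Icc 1 (t + 1) ×ˢ Icc 1 t | p.2 + 1 ≤ p.1 ∧
          lexExcess m (p.1 - 1) = lexExcess m p.2 ∧ lexExcess m p.2 ≠ lexExcess m (p.2 - 1)} :=
    filter_congr fun p hp => by
      rw [mem_product, mem_Icc, mem_Icc] at hp
      rw [hu, hd, lexExcess, lexExcess, lexExcess]
      omega
  have hz_eq : ∀ i, hz i = if i < 0 then 0 else (lexHilbert t m i.toNat : ℤ) := fun i => by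
    rw [hhz, hh]
    rfl
  rw [hA, hB, card_filter_eq_add_one_eq_sum_fiberCard_mul hG hG0 (N := S - t)
      (by rw [lexExcess]; omega),
    sum_Icc_lexHilbert_sub_mul_sub ht (fun _ => nonneg_of_monotoneOn_Iic hG hG0) hz_eq
      (by omega)]
  have hBcount := card_filter_eq_add_fiberCard_zero hG hG0
  push_cast
  omega
end
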